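/- Fix Δt > 0, σ > 0, c > 0 and let ν = cσ/ε². Then as ε → 0⁺, d̃(Δt,ε,σ) = -(c³σ/(4πΔt ε⁴ν²))(Δt(1 + e^{-νΔt}) - (2/ν)(1 - e^{-νΔt})) tends to -c/(4πσ). -/

import Mathlib

theorem stmt_8 (Δt σ c : ℝ) (hΔt : 0 < Δt) (hσ : 0 < σ) (hc : 0 < c) :
    Filter.Tendsto (fun ε : ℝ =>
        -(c ^ 3 * σ / (4 * Real.pi * Δt * ε ^ 4 * (c * σ / ε ^ 2) ^ 2)) *
          (Δt * (1 + Real.exp (-(c * σ / ε ^ 2 * Δt))) -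
            (2 / (c * σ / ε ^ 2)) * (1 - Real.exp (-(c * σ / ε ^ 2 * Δt)))))
      (nhdsWithin 0 (Set.Ioi 0)) (nhds (-(c / (4 * Real.pi * σ)))) := by
  have hπ : (0:ℝ) < Real.pi := Real.pi_pos
  -- ε^2 → 0 within
  have hsq : Filter.Tendsto (fun ε : ℝ => ε ^ 2) (nhdsWithin 0 (Set.Ioi 0))
      (nhdsWithin 0 (Set.Ioi 0)) := by
    apply tendsto_nhdsWithin_of_tendsto_nhds_of_eventually_within
    · have := (continuous_pow 2).tendsto (0:ℝ)
      simpa using this.mono_left nhdsWithin_le_nhds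
    · filter_upwards [self_mem_nhdsWithin] with x hx
      exact pow_pos (Set.mem_Ioi.mp hx) 2
  have hinv : Filter.Tendsto (fun ε : ℝ => c * σ / ε ^ 2 * Δt)
      (nhdsWithin 0 (Set.Ioi 0)) Filter.atTop := by
    have h1 : Filter.Tendsto (fun ε : ℝ => (ε ^ 2)⁻¹) (nhdsWithin 0 (Set.Ioi 0))
        Filter.atTop := tendsto_inv_nhdsGT_zero.comp hsq
    have h2 := (h1.const_mul_atTop (mul_pos hc hσ)).atTop_mul_const hΔt
    refine h2.congr fun ε => by ring
  have hexp : Filter.Tendsto (fun ε : ℝ => Real.exp (-(c * σ / ε ^ 2 * Δt)))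
      (nhdsWithin 0 (Set.Ioi 0)) (nhds 0) := by
    have := Real.tendsto_exp_neg_atTop_nhds_zero.comp hinv
    exact this
  have hsq0 : Filter.Tendsto (fun ε : ℝ => ε ^ 2) (nhdsWithin 0 (Set.Ioi 0)) (nhds 0) :=
    hsq.mono_right nhdsWithin_le_nhds
  -- the simplified function
  have key : Filter.Tendsto (fun ε : ℝ =>
      -(c / (4 * Real.pi * Δt * σ)) *
        (Δt * (1 + Real.exp (-(c * σ / ε ^ 2 * Δt))) -
          (2 * ε ^ 2 / (c * σ)) * (1 - Real.exp (-(c * σ / ε ^ 2 * Δt)))))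
      (nhdsWithin 0 (Set.Ioi 0)) (nhds (-(c / (4 * Real.pi * σ)))) := by
    have := (Filter.Tendsto.const_mul (-(c / (4 * Real.pi * Δt * σ)))
      (((Filter.Tendsto.const_mul Δt (Filter.Tendsto.const_add 1 hexp)).sub
        (((hsq0.const_mul 2).div_const (c * σ)).mul
          (Filter.Tendsto.const_sub 1 hexp)))))
    have heq : -(c / (4 * Real.pi * Δt * σ)) * (Δt * (1 + 0) - 2 * 0 / (c * σ) * (1 - 0))
        = -(c / (4 * Real.pi * σ)) := by
      field_simp
      ring
    rw [heq] at this
    refine this.congr fun ε => by ring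
  refine key.congr' ?_
  filter_upwards [self_mem_nhdsWithin] with ε hε
  have hε0 : ε ≠ 0 := ne_of_gt hε
  have h4 : ε ^ 4 * (c * σ / ε ^ 2) ^ 2 = c ^ 2 * σ ^ 2 := by
    field_simp
  have hc1 : c ^ 3 * σ / (4 * Real.pi * Δt * ε ^ 4 * (c * σ / ε ^ 2) ^ 2)
      = c / (4 * Real.pi * Δt * σ) := by
    rw [mul_assoc, h4]
    rw [div_eq_div_iff (by positivity) (by positivity)]
    ring
  have hc2 : 2 / (c * σ / ε ^ 2) = 2 * ε ^ 2 / (c * σ) := by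
    field_simp
  rw [hc1, hc2]
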